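/- Let (Ω, F, P) be a probability space with a filtration (F_t)_{t ∈ [0,T]}, and let (𝓔_{s,t})_{0 ≤ s ≤ t ≤ T} be an F-evaluation. Let 0 = t_0 < t_1 < ⋯ < t_N = T be a partition of [0, T], let ξ_i ∈ L²(Ω, F_{t_i}, P) for i = 0, …, N−1, and let K be the step process K_s = Σ_{i=0}^{N−1} ξ_i · 1_{[t_i, t_{i+1})}(s) for s ∈ [0, T]. Then there exists a unique F-evaluation (𝓔_{s,t}[·; K])_{0 ≤ s ≤ t ≤ T} such that for every i ∈ {0, …, N−1}, every s, t with t_i ≤ s ≤ t ≤ t_{i+1}, and every X ∈ L²(Ω, F_t, P): 𝓔_{s,t}[X; K] = 𝓔_{s,t}[X + K_t − K_s] almost surely. -/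

import Mathlib

open MeasureTheory

/-- A filtration-consistent nonlinear evaluation (`F`-evaluation) on the time interval
`[0, T]`, acting on square-integrable random variables (Definition 3.1 of the paper).
The operator `eval s t` sends an `F t`-measurable square-integrable variable to an
`F s`-measurable square-integrable one, and satisfies monotonicity, `𝓔_{t,t}[ξ] = ξ`,
time consistency, and the zero-one law `1_A 𝓔_{s,t}[ξ] = 1_A 𝓔_{s,t}[1_A ξ]`. -/
structure FEvaluation {Ω : Type*} [m0 : MeasurableSpace Ω] (P : Measure Ω) (T : ℝ)
    (F : Filtration ℝ m0) where
  eval : ℝ → ℝ → (Ω → ℝ) → Ω → ℝ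
  measurable_eval : ∀ s t ξ, 0 ≤ s → s ≤ t → t ≤ T →
    AEStronglyMeasurable[F t] ξ P → MemLp ξ 2 P →
    AEStronglyMeasurable[F s] (eval s t ξ) P
  memL2_eval : ∀ s t ξ, 0 ≤ s → s ≤ t → t ≤ T →
    AEStronglyMeasurable[F t] ξ P → MemLp ξ 2 P → MemLp (eval s t ξ) 2 P
  mono : ∀ s t ξ η, 0 ≤ s → s ≤ t → t ≤ T →
    AEStronglyMeasurable[F t] ξ P → MemLp ξ 2 P →
    AEStronglyMeasurable[F t] η P → MemLp η 2 P →
    (∀ᵐ ω ∂P, η ω ≤ ξ ω) → ∀ᵐ ω ∂P, eval s t η ω ≤ eval s t ξ ω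
  eval_self : ∀ t ξ, 0 ≤ t → t ≤ T →
    AEStronglyMeasurable[F t] ξ P → MemLp ξ 2 P → eval t t ξ =ᵐ[P] ξ
  consistent : ∀ r s t ξ, 0 ≤ r → r ≤ s → s ≤ t → t ≤ T →
    AEStronglyMeasurable[F t] ξ P → MemLp ξ 2 P →
    eval r s (eval s t ξ) =ᵐ[P] eval r t ξ
  zero_one : ∀ s t ξ (A : Set Ω), 0 ≤ s → s ≤ t → t ≤ T →
    AEStronglyMeasurable[F t] ξ P → MemLp ξ 2 P → MeasurableSet[F s] A →
    ∀ᵐ ω ∂P, ω ∈ A → eval s t ξ ω = eval s t (A.indicator ξ) ω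

/-- The step process `K_s = Σ_{i=0}^{N-1} ξ_i 1_{[t_i, t_{i+1})}(s)`. -/
noncomputable def stepProcess {Ω : Type*} (N : ℕ) (t : Fin (N + 1) → ℝ) (ξ : Fin N → Ω → ℝ)
    (s : ℝ) (ω : Ω) : ℝ :=
  ∑ i : Fin N, if t i.castSucc ≤ s ∧ s < t i.succ then ξ i ω else 0

/-- The evaluation `E'` agrees with `X ↦ E[X + K_t − K_s]` on each subinterval of the
partition (property (3.1) of Proposition 3.5 of the paper). -/
def ShiftProperty {Ω : Type*} [m0 : MeasurableSpace Ω] {P : Measure Ω} {T : ℝ}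
    {F : Filtration ℝ m0} (E E' : FEvaluation P T F)
    (N : ℕ) (t : Fin (N + 1) → ℝ) (ξ : Fin N → Ω → ℝ) : Prop :=
  ∀ (i : Fin N) (s u : ℝ), t i.castSucc ≤ s → s ≤ u → u ≤ t i.succ →
    ∀ X : Ω → ℝ, AEStronglyMeasurable[F u] X P → MemLp X 2 P →
      E'.eval s u X =ᵐ[P]
        E.eval s u (fun ω => X ω + stepProcess N t ξ u ω - stepProcess N t ξ s ω)

/-!
Consistency forces `𝓔_{s,u} = 𝓔_{s,τ} ∘ 𝓔_{τ,u}` for `s ≤ τ ≤ u`, so an evaluation is determined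
by its restrictions to the cells of a partition; conversely, evaluations on `[a, τ]` and `[τ, b]`
glue through this formula to an evaluation on `[a, b]`. On a cell `[t_i, t_{i+1}]` the map
`X ↦ 𝓔_{s,u}[X + K_u - K_s]` is an evaluation, because `K` is constant on `[t_i, t_{i+1})`: the
increment only jumps at the right end point, after which nothing is composed. Gluing the cells
along the partition gives existence, and the splitting formula gives uniqueness.
-/

open Filter

section GlueDef

variable {Ω : Type*} {τ : ℝ} {e₁ e₂ : ℝ → ℝ → (Ω → ℝ) → Ω → ℝ}

noncomputable def glue (τ : ℝ) (e₁ e₂ : ℝ → ℝ → (Ω → ℝ) → Ω → ℝ) : ℝ → ℝ → (Ω → ℝ) → Ω → ℝ :=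
  fun s u X => if u ≤ τ then e₁ s u X else if τ ≤ s then e₂ s u X else e₁ s τ (e₂ τ u X)

theorem glue_of_le {s u : ℝ} (h : u ≤ τ) : glue τ e₁ e₂ s u = e₁ s u := by
  funext X; simp only [glue, if_pos h]

theorem glue_of_lt_of_le {s u : ℝ} (hτu : τ < u) (hτs : τ ≤ s) : glue τ e₁ e₂ s u = e₂ s u := by
  funext X; simp only [glue, if_neg hτu.not_ge, if_pos hτs]

theorem glue_of_lt_of_lt {s u : ℝ} (hsτ : s < τ) (hτu : τ < u) (X : Ω → ℝ) :
    glue τ e₁ e₂ s u X = e₁ s τ (e₂ τ u X) := by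
  simp only [glue, if_neg hτu.not_ge, if_neg hsτ.not_ge]

end GlueDef

section Evaluations

variable {Ω : Type*} [m0 : MeasurableSpace Ω] {P : Measure Ω} {F : Filtration ℝ m0}

/-- `L²(Ω, F_u, P)`, as functions rather than a.e.-classes. -/
def L2At (P : Measure Ω) (F : Filtration ℝ m0) (u : ℝ) : AddSubgroup (Ω → ℝ) where
  carrier := {X | AEStronglyMeasurable[F u] X P ∧ MemLp X 2 P}
  add_mem' hX hY := ⟨hX.1.add hY.1, hX.2.add hY.2⟩
  zero_mem' := ⟨aestronglyMeasurable_const, MemLp.zero⟩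
  neg_mem' hX := ⟨hX.1.neg, hX.2.neg⟩

theorem L2At_mono : Monotone (L2At P F) :=
  fun _ _ huv _ hX => ⟨hX.1.mono (F.mono huv), hX.2⟩

theorem indicator_mem_L2At {s u : ℝ} (hsu : s ≤ u) {A : Set Ω} (hA : MeasurableSet[F s] A)
    {X : Ω → ℝ} (hX : X ∈ L2At P F u) : A.indicator X ∈ L2At P F u :=
  have ⟨g, hg, hXg⟩ := hX.1
  ⟨⟨A.indicator g, hg.indicator (F.mono hsu A hA), hXg.indicator⟩, hX.2.indicator (F.le s A hA)⟩

structure IsEvaluationOn (P : Measure Ω) (F : Filtration ℝ m0) (a b : ℝ)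
    (e : ℝ → ℝ → (Ω → ℝ) → Ω → ℝ) : Prop where
  mapsTo : ∀ ⦃s u⦄, a ≤ s → s ≤ u → u ≤ b → ∀ ⦃X⦄, X ∈ L2At P F u → e s u X ∈ L2At P F s
  mono : ∀ ⦃s u⦄, a ≤ s → s ≤ u → u ≤ b → ∀ ⦃X Y⦄, X ∈ L2At P F u → Y ∈ L2At P F u →
    X ≤ᵐ[P] Y → e s u X ≤ᵐ[P] e s u Y
  eval_self : ∀ ⦃u⦄, a ≤ u → u ≤ b → ∀ ⦃X⦄, X ∈ L2At P F u → e u u X =ᵐ[P] X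
  consistent : ∀ ⦃r s u⦄, a ≤ r → r ≤ s → s ≤ u → u ≤ b → ∀ ⦃X⦄, X ∈ L2At P F u →
    e r s (e s u X) =ᵐ[P] e r u X
  indicator_eval : ∀ ⦃s u⦄, a ≤ s → s ≤ u → u ≤ b → ∀ ⦃A⦄, MeasurableSet[F s] A →
    ∀ ⦃X⦄, X ∈ L2At P F u → A.indicator (e s u X) =ᵐ[P] A.indicator (e s u (A.indicator X))

theorem FEvaluation.isEvaluationOn {T : ℝ} (E : FEvaluation P T F) :
    IsEvaluationOn P F 0 T E.eval where
  mapsTo s u has hsu hub X hX :=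
    ⟨E.measurable_eval s u X has hsu hub hX.1 hX.2, E.memL2_eval s u X has hsu hub hX.1 hX.2⟩
  mono s u has hsu hub X Y hX hY h := E.mono s u Y X has hsu hub hY.1 hY.2 hX.1 hX.2 h
  eval_self u ha hb X hX := E.eval_self u X ha hb hX.1 hX.2
  consistent r s u har hrs hsu hub X hX := E.consistent r s u X har hrs hsu hub hX.1 hX.2
  indicator_eval s u has hsu hub A hA X hX :=
    (E.zero_one s u X A has hsu hub hX.1 hX.2 hA).mono fun ω h => by
      by_cases hω : ω ∈ A <;> simp [hω, h]

def IsEvaluationOn.toFEvaluation {T : ℝ} {e : ℝ → ℝ → (Ω → ℝ) → Ω → ℝ}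
    (he : IsEvaluationOn P F 0 T e) : FEvaluation P T F where
  eval := e
  measurable_eval s u X has hsu hub hXm hX2 := (he.mapsTo has hsu hub ⟨hXm, hX2⟩).1
  memL2_eval s u X has hsu hub hXm hX2 := (he.mapsTo has hsu hub ⟨hXm, hX2⟩).2
  mono s u X Y has hsu hub hXm hX2 hYm hY2 h := he.mono has hsu hub ⟨hYm, hY2⟩ ⟨hXm, hX2⟩ h
  eval_self u X ha hb hXm hX2 := he.eval_self ha hb ⟨hXm, hX2⟩
  consistent r s u X har hrs hsu hub hXm hX2 := he.consistent har hrs hsu hub ⟨hXm, hX2⟩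
  zero_one s u X A has hsu hub hXm hX2 hA :=
    (he.indicator_eval has hsu hub hA ⟨hXm, hX2⟩).mono fun ω h hω => by
      simpa [hω] using h

def AEEqOn (P : Measure Ω) (F : Filtration ℝ m0) (a b : ℝ)
    (e e' : ℝ → ℝ → (Ω → ℝ) → Ω → ℝ) : Prop :=
  ∀ ⦃s u⦄, a ≤ s → s ≤ u → u ≤ b → ∀ ⦃X⦄, X ∈ L2At P F u → e s u X =ᵐ[P] e' s u X

namespace AEEqOn

variable {a b : ℝ} {e e' e'' : ℝ → ℝ → (Ω → ℝ) → Ω → ℝ}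

theorem symm (h : AEEqOn P F a b e e') : AEEqOn P F a b e' e :=
  fun _ _ has hsu hub _ hX => (h has hsu hub hX).symm

theorem trans (h : AEEqOn P F a b e e') (h' : AEEqOn P F a b e' e'') : AEEqOn P F a b e e'' :=
  fun _ _ has hsu hub _ hX => (h has hsu hub hX).trans (h' has hsu hub hX)

end AEEqOn

namespace IsEvaluationOn

variable {a b : ℝ} {e e' : ℝ → ℝ → (Ω → ℝ) → Ω → ℝ}

theorem congr_ae (he : IsEvaluationOn P F a b e) {s u : ℝ} (has : a ≤ s) (hsu : s ≤ u)
    (hub : u ≤ b) {X Y : Ω → ℝ} (hX : X ∈ L2At P F u) (hY : Y ∈ L2At P F u) (h : X =ᵐ[P] Y) :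
    e s u X =ᵐ[P] e s u Y :=
  (he.mono has hsu hub hX hY h.le).antisymm (he.mono has hsu hub hY hX h.symm.le)

theorem restrict (he : IsEvaluationOn P F a b e) {a' b' : ℝ} (ha : a ≤ a') (hb : b' ≤ b) :
    IsEvaluationOn P F a' b' e where
  mapsTo _ _ has hsu hub := he.mapsTo (ha.trans has) hsu (hub.trans hb)
  mono _ _ has hsu hub := he.mono (ha.trans has) hsu (hub.trans hb)
  eval_self _ hau hub := he.eval_self (ha.trans hau) (hub.trans hb)
  consistent _ _ _ har hrs hsu hub := he.consistent (ha.trans har) hrs hsu (hub.trans hb)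
  indicator_eval _ _ has hsu hub := he.indicator_eval (ha.trans has) hsu (hub.trans hb)

theorem id_Icc_self (a : ℝ) : IsEvaluationOn P F a a fun _ _ X => X where
  mapsTo s u has hsu hua X hX := le_antisymm hsu (hua.trans has) ▸ hX
  mono _ _ _ _ _ _ _ _ _ h := h
  eval_self _ _ _ _ _ := EventuallyEq.rfl
  consistent _ _ _ _ _ _ _ _ _ := EventuallyEq.rfl
  indicator_eval _ _ _ _ _ A _ X _ := by rw [Set.indicator_indicator, Set.inter_self]

theorem aeEqOn_of_split (he : IsEvaluationOn P F a b e) (he' : IsEvaluationOn P F a b e')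
    {τ : ℝ} (h₁ : AEEqOn P F a τ e e') (h₂ : AEEqOn P F τ b e e') : AEEqOn P F a b e e' := by
  intro s u has hsu hub X hX
  rcases le_or_gt u τ with huτ | hτu
  · exact h₁ has hsu huτ hX
  rcases le_or_gt τ s with hτs | hsτ
  · exact h₂ hτs hsu hub hX
  have haτ := has.trans hsτ.le
  calc e s u X =ᵐ[P] e s τ (e τ u X) := (he.consistent has hsτ.le hτu.le hub hX).symm
    _ =ᵐ[P] e s τ (e' τ u X) := he.congr_ae has hsτ.le (hτu.le.trans hub)
      (he.mapsTo haτ hτu.le hub hX) (he'.mapsTo haτ hτu.le hub hX) (h₂ le_rfl hτu.le hub hX)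
    _ =ᵐ[P] e' s τ (e' τ u X) := h₁ has hsτ.le le_rfl (he'.mapsTo haτ hτu.le hub hX)
    _ =ᵐ[P] e' s u X := he'.consistent has hsτ.le hτu.le hub hX

end IsEvaluationOn

section Glue

variable {a b τ : ℝ} {e₁ e₂ : ℝ → ℝ → (Ω → ℝ) → Ω → ℝ}

theorem glue_mapsTo (h₁ : IsEvaluationOn P F a τ e₁) (h₂ : IsEvaluationOn P F τ b e₂)
    {s u : ℝ} (has : a ≤ s) (hsu : s ≤ u) (hub : u ≤ b) {X : Ω → ℝ} (hX : X ∈ L2At P F u) :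
    glue τ e₁ e₂ s u X ∈ L2At P F s := by
  rcases le_or_gt u τ with huτ | hτu
  · rw [glue_of_le huτ]; exact h₁.mapsTo has hsu huτ hX
  rcases le_or_gt τ s with hτs | hsτ
  · rw [glue_of_lt_of_le hτu hτs]; exact h₂.mapsTo hτs hsu hub hX
  · rw [glue_of_lt_of_lt hsτ hτu]
    exact h₁.mapsTo has hsτ.le le_rfl (h₂.mapsTo le_rfl hτu.le hub hX)

theorem glue_ae_eq_right (h₁ : IsEvaluationOn P F a τ e₁) (h₂ : IsEvaluationOn P F τ b e₂)
    {s u : ℝ} (has : a ≤ s) (hτs : τ ≤ s) (hsu : s ≤ u) (hub : u ≤ b) {X : Ω → ℝ}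
    (hX : X ∈ L2At P F u) : glue τ e₁ e₂ s u X =ᵐ[P] e₂ s u X := by
  rcases le_or_gt u τ with huτ | hτu
  · obtain rfl : s = τ := le_antisymm (hsu.trans huτ) hτs
    obtain rfl : u = s := le_antisymm huτ hsu
    rw [glue_of_le le_rfl]
    exact (h₁.eval_self has hsu hX).trans (h₂.eval_self hτs hub hX).symm
  · rw [glue_of_lt_of_le hτu hτs]

theorem glue_ae_eq_comp (h₁ : IsEvaluationOn P F a τ e₁) (h₂ : IsEvaluationOn P F τ b e₂)
    {s u : ℝ} (has : a ≤ s) (hsτ : s ≤ τ) (hτu : τ ≤ u) (hub : u ≤ b)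
    {X : Ω → ℝ} (hX : X ∈ L2At P F u) : glue τ e₁ e₂ s u X =ᵐ[P] e₁ s τ (e₂ τ u X) := by
  rcases hτu.eq_or_lt with rfl | hτu
  · rw [glue_of_le le_rfl]
    exact h₁.congr_ae has hsτ le_rfl hX (h₂.mapsTo le_rfl le_rfl hub hX)
      (h₂.eval_self le_rfl hub hX).symm
  rcases hsτ.eq_or_lt with rfl | hsτ
  · rw [glue_of_lt_of_le hτu le_rfl]
    exact (h₁.eval_self has le_rfl (h₂.mapsTo le_rfl hτu.le hub hX)).symm
  · rw [glue_of_lt_of_lt hsτ hτu]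

theorem glue_consistent (h₁ : IsEvaluationOn P F a τ e₁) (h₂ : IsEvaluationOn P F τ b e₂)
    {r s u : ℝ} (har : a ≤ r) (hrs : r ≤ s) (hsu : s ≤ u) (hub : u ≤ b) {X : Ω → ℝ}
    (hX : X ∈ L2At P F u) :
    glue τ e₁ e₂ r s (glue τ e₁ e₂ s u X) =ᵐ[P] glue τ e₁ e₂ r u X := by
  have has := har.trans hrs
  have hGX := glue_mapsTo h₁ h₂ has hsu hub hX
  rcases le_or_gt u τ with huτ | hτu
  · rw [glue_of_le huτ, glue_of_le (hsu.trans huτ), glue_of_le huτ]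
    exact h₁.consistent har hrs hsu huτ hX
  have he₂X := h₂.mapsTo le_rfl hτu.le hub hX
  rcases le_total s τ with hsτ | hτs
  · rw [glue_of_le hsτ]
    calc e₁ r s (glue τ e₁ e₂ s u X) =ᵐ[P] e₁ r s (e₁ s τ (e₂ τ u X)) :=
          h₁.congr_ae har hrs hsτ hGX (h₁.mapsTo has hsτ le_rfl he₂X)
            (glue_ae_eq_comp h₁ h₂ has hsτ hτu.le hub hX)
      _ =ᵐ[P] e₁ r τ (e₂ τ u X) := h₁.consistent har hrs hsτ le_rfl he₂X
      _ =ᵐ[P] glue τ e₁ e₂ r u X :=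
          (glue_ae_eq_comp h₁ h₂ har (hrs.trans hsτ) hτu.le hub hX).symm
  have he₂GX := h₂.mapsTo hτs hsu hub hX
  have hGX_eq := glue_ae_eq_right h₁ h₂ has hτs hsu hub hX
  rcases le_total r τ with hrτ | hτr
  · calc glue τ e₁ e₂ r s (glue τ e₁ e₂ s u X)
          =ᵐ[P] e₁ r τ (e₂ τ s (glue τ e₁ e₂ s u X)) :=
          glue_ae_eq_comp h₁ h₂ har hrτ hτs (hsu.trans hub) hGX
      _ =ᵐ[P] e₁ r τ (e₂ τ u X) := by
          refine h₁.congr_ae har hrτ le_rfl (h₂.mapsTo le_rfl hτs (hsu.trans hub) hGX)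
            he₂X ?_
          exact (h₂.congr_ae le_rfl hτs (hsu.trans hub) hGX he₂GX hGX_eq).trans
            (h₂.consistent le_rfl hτs hsu hub hX)
      _ =ᵐ[P] glue τ e₁ e₂ r u X := (glue_ae_eq_comp h₁ h₂ har hrτ hτu.le hub hX).symm
  · calc glue τ e₁ e₂ r s (glue τ e₁ e₂ s u X) =ᵐ[P] e₂ r s (glue τ e₁ e₂ s u X) :=
          glue_ae_eq_right h₁ h₂ har hτr hrs (hsu.trans hub) hGX
      _ =ᵐ[P] e₂ r s (e₂ s u X) := h₂.congr_ae hτr hrs (hsu.trans hub) hGX he₂GX hGX_eq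
      _ =ᵐ[P] e₂ r u X := h₂.consistent hτr hrs hsu hub hX
      _ =ᵐ[P] glue τ e₁ e₂ r u X :=
          (glue_ae_eq_right h₁ h₂ har hτr (hrs.trans hsu) hub hX).symm

theorem glue_indicator_eval (h₁ : IsEvaluationOn P F a τ e₁) (h₂ : IsEvaluationOn P F τ b e₂)
    {s u : ℝ} (has : a ≤ s) (hsu : s ≤ u) (hub : u ≤ b) {A : Set Ω} (hA : MeasurableSet[F s] A)
    {X : Ω → ℝ} (hX : X ∈ L2At P F u) :
    A.indicator (glue τ e₁ e₂ s u X) =ᵐ[P] A.indicator (glue τ e₁ e₂ s u (A.indicator X)) := by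
  rcases le_or_gt u τ with huτ | hτu
  · rw [glue_of_le huτ]; exact h₁.indicator_eval has hsu huτ hA hX
  rcases le_or_gt τ s with hτs | hsτ
  · rw [glue_of_lt_of_le hτu hτs]; exact h₂.indicator_eval hτs hsu hub hA hX
  rw [glue_of_lt_of_lt hsτ hτu, glue_of_lt_of_lt hsτ hτu]
  have hAτ : MeasurableSet[F τ] A := F.mono hsτ.le A hA
  have hY := h₂.mapsTo le_rfl hτu.le hub hX
  have hY' := h₂.mapsTo le_rfl hτu.le hub (indicator_mem_L2At hsu hA hX)
  calc A.indicator (e₁ s τ (e₂ τ u X)) =ᵐ[P] A.indicator (e₁ s τ (A.indicator (e₂ τ u X))) :=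
        h₁.indicator_eval has hsτ.le le_rfl hA hY
    _ =ᵐ[P] A.indicator (e₁ s τ (A.indicator (e₂ τ u (A.indicator X)))) :=
        (h₁.congr_ae has hsτ.le le_rfl (indicator_mem_L2At hsτ.le hA hY)
          (indicator_mem_L2At hsτ.le hA hY') (h₂.indicator_eval le_rfl hτu.le hub hAτ hX)).indicator
    _ =ᵐ[P] A.indicator (e₁ s τ (e₂ τ u (A.indicator X))) :=
        (h₁.indicator_eval has hsτ.le le_rfl hA hY').symm

theorem IsEvaluationOn.glue (h₁ : IsEvaluationOn P F a τ e₁) (h₂ : IsEvaluationOn P F τ b e₂) :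
    IsEvaluationOn P F a b (glue τ e₁ e₂) where
  mapsTo _ _ has hsu hub _ hX := glue_mapsTo h₁ h₂ has hsu hub hX
  mono s u has hsu hub X Y hX hY h := by
    rcases le_or_gt u τ with huτ | hτu
    · rw [glue_of_le huτ]; exact h₁.mono has hsu huτ hX hY h
    rcases le_or_gt τ s with hτs | hsτ
    · rw [glue_of_lt_of_le hτu hτs]; exact h₂.mono hτs hsu hub hX hY h
    simp only [glue_of_lt_of_lt hsτ hτu]
    exact h₁.mono has hsτ.le le_rfl (h₂.mapsTo le_rfl hτu.le hub hX)
      (h₂.mapsTo le_rfl hτu.le hub hY) (h₂.mono le_rfl hτu.le hub hX hY h)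
  eval_self u hau hub X hX := by
    rcases le_or_gt u τ with huτ | hτu
    · rw [glue_of_le huτ]; exact h₁.eval_self hau huτ hX
    · rw [glue_of_lt_of_le hτu hτu.le]; exact h₂.eval_self hτu.le hub hX
  consistent _ _ _ har hrs hsu hub _ hX := glue_consistent h₁ h₂ har hrs hsu hub hX
  indicator_eval _ _ has hsu hub _ hA _ hX := glue_indicator_eval h₁ h₂ has hsu hub hA hX

end Glue

section Partition

variable {N : ℕ} {t : Fin (N + 1) → ℝ} {D e e' : ℝ → ℝ → (Ω → ℝ) → Ω → ℝ}

theorem exists_isEvaluationOn_of_cells (ht : Monotone t)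
    (hD : ∀ i : Fin N, IsEvaluationOn P F (t i.castSucc) (t i.succ) D) :
    ∃ e, IsEvaluationOn P F (t 0) (t (Fin.last N)) e ∧
      ∀ i : Fin N, AEEqOn P F (t i.castSucc) (t i.succ) e D := by
  suffices ∀ k : Fin (N + 1), ∃ e, IsEvaluationOn P F (t 0) (t k) e ∧
      ∀ i : Fin N, i.succ ≤ k → AEEqOn P F (t i.castSucc) (t i.succ) e D by
    obtain ⟨e, he, heD⟩ := this (Fin.last N)
    exact ⟨e, he, fun i => heD i (Fin.le_last _)⟩
  intro k
  induction k using Fin.induction with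
  | zero => exact ⟨_, IsEvaluationOn.id_Icc_self _, fun i hi => absurd hi (Fin.succ_pos i).not_ge⟩
  | succ k ih =>
    obtain ⟨e, he, heD⟩ := ih
    refine ⟨glue (t k.castSucc) e D, he.glue (hD k), fun i hi => ?_⟩
    intro s u his hsu hui X hX
    rcases (Fin.succ_le_succ_iff.1 hi).lt_or_eq with hik | rfl
    · rw [glue_of_le (hui.trans (ht (Fin.succ_le_castSucc_iff.2 hik)))]
      exact heD i (Fin.succ_le_castSucc_iff.2 hik) his hsu hui hX
    · exact glue_ae_eq_right he (hD i) ((ht (Fin.zero_le _)).trans his) his hsu hui hX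

theorem IsEvaluationOn.aeEqOn_of_cells (ht : Monotone t)
    (he : IsEvaluationOn P F (t 0) (t (Fin.last N)) e)
    (he' : IsEvaluationOn P F (t 0) (t (Fin.last N)) e')
    (h : ∀ i : Fin N, AEEqOn P F (t i.castSucc) (t i.succ) e e') :
    AEEqOn P F (t 0) (t (Fin.last N)) e e' := by
  suffices ∀ k : Fin (N + 1), AEEqOn P F (t 0) (t k) e e' from this (Fin.last N)
  intro k
  induction k using Fin.induction with
  | zero =>
    intro s u hs hsu hu X hX
    obtain rfl : s = u := le_antisymm hsu (hu.trans hs)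
    have hlast := hu.trans (ht (Fin.zero_le (Fin.last N)))
    exact (he.eval_self hs hlast hX).trans (he'.eval_self hs hlast hX).symm
  | succ k ih =>
    have hk := ht (Fin.le_last k.succ)
    exact (he.restrict le_rfl hk).aeEqOn_of_split (he'.restrict le_rfl hk) ih (h k)

end Partition

/-- The paper's `𝓔_{s,u}[X; K]`, for `e = 𝓔` and `L = K`. -/
noncomputable def shiftedEval (e : ℝ → ℝ → (Ω → ℝ) → Ω → ℝ) (L : ℝ → Ω → ℝ) :
    ℝ → ℝ → (Ω → ℝ) → Ω → ℝ :=
  fun s u X => e s u (fun ω => X ω + L u ω - L s ω)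

section Shift

variable {a b : ℝ} {e : ℝ → ℝ → (Ω → ℝ) → Ω → ℝ} {L : ℝ → Ω → ℝ}

theorem increment_mem_L2At (hL : ∀ u ∈ Set.Icc a b, L u ∈ L2At P F u) {s u : ℝ} (has : a ≤ s)
    (hsu : s ≤ u) (hub : u ≤ b) {X : Ω → ℝ} (hX : X ∈ L2At P F u) :
    (fun ω => X ω + L u ω - L s ω) ∈ L2At P F u :=
  sub_mem (add_mem hX (hL u ⟨has.trans hsu, hub⟩)) (L2At_mono hsu (hL s ⟨has, hsu.trans hub⟩))

theorem shiftedEval_self (he : IsEvaluationOn P F a b e) {u : ℝ} (hau : a ≤ u) (hub : u ≤ b)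
    {X : Ω → ℝ} (hX : X ∈ L2At P F u) : shiftedEval e L u u X =ᵐ[P] X := by
  simp only [shiftedEval, add_sub_cancel_right]
  exact he.eval_self hau hub hX

theorem IsEvaluationOn.shifted (he : IsEvaluationOn P F a b e)
    (hL : ∀ u ∈ Set.Icc a b, L u ∈ L2At P F u)
    (hconst : ∀ ⦃r s⦄, a ≤ r → r ≤ s → s < b → L r = L s) :
    IsEvaluationOn P F a b (shiftedEval e L) where
  mapsTo _ _ has hsu hub _ hX := he.mapsTo has hsu hub (increment_mem_L2At hL has hsu hub hX)
  mono _ _ has hsu hub _ _ hX hY h :=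
    he.mono has hsu hub (increment_mem_L2At hL has hsu hub hX)
      (increment_mem_L2At hL has hsu hub hY)
      (h.mono fun _ hω => by dsimp only; linarith)
  eval_self _ hau hub _ hX := shiftedEval_self he hau hub hX
  consistent r s u har hrs hsu hub X hX := by
    -- for `s < b` we have `L r = L s`; for `s = u = b` the inner evaluation is the identity
    rcases hsu.eq_or_lt with rfl | hsu'
    · have hsb := hsu.trans hub
      refine he.congr_ae har hrs hsb
        (increment_mem_L2At hL har hrs hsb (he.mapsTo (har.trans hrs) le_rfl hsb
          (increment_mem_L2At hL (har.trans hrs) le_rfl hsb hX)))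
        (increment_mem_L2At hL har hrs hsb hX) ?_
      exact ((shiftedEval_self he (har.trans hrs) hsb hX).add EventuallyEq.rfl).sub EventuallyEq.rfl
    · simp only [shiftedEval, hconst har hrs (hsu'.trans_le hub), add_sub_cancel_right]
      exact he.consistent har hrs hsu hub (increment_mem_L2At hL (har.trans hrs) hsu hub hX)
  indicator_eval s u has hsu hub A hA X hX := by
    have hA_indicator : A.indicator (fun ω => X ω + L u ω - L s ω) =
        A.indicator (fun ω => A.indicator X ω + L u ω - L s ω) := by
      ext ω; by_cases hω : ω ∈ A <;> simp [hω]
    refine (he.indicator_eval has hsu hub hA (increment_mem_L2At hL has hsu hub hX)).trans ?_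
    rw [hA_indicator]
    exact (he.indicator_eval has hsu hub hA
      (increment_mem_L2At hL has hsu hub (indicator_mem_L2At hsu hA hX))).symm

end Shift

end Evaluations

section StepProcess

variable {Ω : Type*} {N : ℕ} {t : Fin (N + 1) → ℝ} {ξ : Fin N → Ω → ℝ}

theorem stepProcess_eq_of_mem (ht : Monotone t) (i : Fin N) {s : ℝ} (h₁ : t i.castSucc ≤ s)
    (h₂ : s < t i.succ) : stepProcess N t ξ s = ξ i := by
  funext ω
  rw [stepProcess, Finset.sum_eq_single_of_mem i (Finset.mem_univ i), if_pos ⟨h₁, h₂⟩]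
  intro j _ hji
  refine if_neg fun ⟨hj₁, hj₂⟩ => ?_
  rcases hji.lt_or_gt with hji | hij
  · linarith [ht (Fin.succ_le_castSucc_iff.2 hji)]
  · linarith [ht (Fin.succ_le_castSucc_iff.2 hij)]

theorem stepProcess_mem_L2At [m0 : MeasurableSpace Ω] {P : Measure Ω} {F : Filtration ℝ m0}
    (hξm : ∀ i : Fin N, AEStronglyMeasurable[F (t i.castSucc)] (ξ i) P)
    (hξ2 : ∀ i : Fin N, MemLp (ξ i) 2 P) (u : ℝ) : stepProcess N t ξ u ∈ L2At P F u := by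
  have hsum : stepProcess N t ξ u =
      ∑ i : Fin N, if t i.castSucc ≤ u ∧ u < t i.succ then ξ i else 0 := by
    funext ω
    simp only [stepProcess, Finset.sum_apply]
    exact Finset.sum_congr rfl fun i _ => by split_ifs <;> rfl
  rw [hsum]
  refine sum_mem fun i _ => ?_
  split_ifs with hi
  exacts [⟨(hξm i).mono (F.mono hi.1), hξ2 i⟩, zero_mem _]

end StepProcess

theorem shiftProperty_iff {Ω : Type*} [m0 : MeasurableSpace Ω] {P : Measure Ω} {T : ℝ}
    {F : Filtration ℝ m0} {E E' : FEvaluation P T F} {N : ℕ} {t : Fin (N + 1) → ℝ}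
    {ξ : Fin N → Ω → ℝ} :
    ShiftProperty E E' N t ξ ↔
      ∀ i : Fin N, AEEqOn P F (t i.castSucc) (t i.succ) E'.eval
        (shiftedEval E.eval (stepProcess N t ξ)) :=
  ⟨fun h i _ _ h₁ hsu h₂ _ hX => h i _ _ h₁ hsu h₂ _ hX.1 hX.2,
    fun h i _ _ h₁ hsu h₂ _ hXm hX2 => h i h₁ hsu h₂ ⟨hXm, hX2⟩⟩

theorem stmt_7_general {Ω : Type*} [m0 : MeasurableSpace Ω] (P : Measure Ω)
    (T : ℝ) (F : Filtration ℝ m0) (E : FEvaluation P T F)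
    (N : ℕ) (t : Fin (N + 1) → ℝ) (hmono : StrictMono t)
    (ht0 : t 0 = 0) (htN : t (Fin.last N) = T)
    (ξ : Fin N → Ω → ℝ)
    (hξm : ∀ i : Fin N, AEStronglyMeasurable[F (t i.castSucc)] (ξ i) P)
    (hξ2 : ∀ i : Fin N, MemLp (ξ i) 2 P) :
    ∃ E' : FEvaluation P T F, ShiftProperty E E' N t ξ ∧
      ∀ E'' : FEvaluation P T F, ShiftProperty E E'' N t ξ →
        ∀ (s u : ℝ) (X : Ω → ℝ), 0 ≤ s → s ≤ u → u ≤ T →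
          AEStronglyMeasurable[F u] X P → MemLp X 2 P →
          E''.eval s u X =ᵐ[P] E'.eval s u X := by
  have ht := hmono.monotone
  have hE : IsEvaluationOn P F (t 0) (t (Fin.last N)) E.eval := by
    rw [ht0, htN]; exact E.isEvaluationOn
  have hcell (i : Fin N) :
      IsEvaluationOn P F (t i.castSucc) (t i.succ) (shiftedEval E.eval (stepProcess N t ξ)) :=
    (hE.restrict (ht (Fin.zero_le _)) (ht (Fin.le_last _))).shifted
      (fun u _ => stepProcess_mem_L2At hξm hξ2 u)
      fun r s hr hrs hs => (stepProcess_eq_of_mem ht i hr (hrs.trans_lt hs)).trans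
        (stepProcess_eq_of_mem ht i (hr.trans hrs) hs).symm
  obtain ⟨e, he, heK⟩ := exists_isEvaluationOn_of_cells ht hcell
  have he0T : IsEvaluationOn P F 0 T e := by rwa [ht0, htN] at he
  refine ⟨he0T.toFEvaluation, shiftProperty_iff.2 heK, fun E'' hK'' s u X hs hsu hu hXm hX2 => ?_⟩
  have hE'' : IsEvaluationOn P F (t 0) (t (Fin.last N)) E''.eval := by
    rw [ht0, htN]; exact E''.isEvaluationOn
  exact hE''.aeEqOn_of_cells ht he (fun i => (shiftProperty_iff.1 hK'' i).trans (heK i).symm)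
    (ht0 ▸ hs) hsu (htN ▸ hu) ⟨hXm, hX2⟩

/-- **Proposition 3.5 of the paper.** Given an `F`-evaluation `𝓔` and a
step process `K_s = Σ ξ_i 1_{[t_i,t_{i+1})}(s)` with `ξ_i ∈ L²(F_{t_i})`, there is an
`F`-evaluation `𝓔[·;K]`, unique up to almost-sure equality, satisfying
`𝓔_{s,t}[X;K] = 𝓔_{s,t}[X + K_t − K_s]` a.s. whenever `t_i ≤ s ≤ t ≤ t_{i+1}` and
`X ∈ L²(F_t)`. -/
theorem stmt_7 {Ω : Type*} [m0 : MeasurableSpace Ω] (P : Measure Ω) [IsProbabilityMeasure P]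
    (T : ℝ) (hT : 0 < T) (F : Filtration ℝ m0) (E : FEvaluation P T F)
    (N : ℕ) (hN : 0 < N) (t : Fin (N + 1) → ℝ) (hmono : StrictMono t)
    (ht0 : t 0 = 0) (htN : t (Fin.last N) = T)
    (ξ : Fin N → Ω → ℝ)
    (hξm : ∀ i : Fin N, AEStronglyMeasurable[F (t i.castSucc)] (ξ i) P)
    (hξ2 : ∀ i : Fin N, MemLp (ξ i) 2 P) :
    ∃ E' : FEvaluation P T F, ShiftProperty E E' N t ξ ∧
      ∀ E'' : FEvaluation P T F, ShiftProperty E E'' N t ξ →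
        ∀ (s u : ℝ) (X : Ω → ℝ), 0 ≤ s → s ≤ u → u ≤ T →
          AEStronglyMeasurable[F u] X P → MemLp X 2 P →
          E''.eval s u X =ᵐ[P] E'.eval s u X :=
  stmt_7_general (m0 := m0) P T F E N t hmono ht0 htN ξ hξm hξ2
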